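/- Let n ≥ 3, let V : ℝⁿ → ℝⁿ be a smooth vector field and u : ℝⁿ → ℝ a smooth function. The first-order operator D f = Σ_a V^a ∂_a f + u f maps every harmonic function on ℝⁿ to a harmonic function if and only if V is a conformal Killing vector and there is a constant c ∈ ℝ with u = ((n−2)/(2n)) (div V) + c. -/

import Mathlib

/-- Partial derivative in the `a`-th coordinate direction. -/
noncomputable def pd {n : ℕ} (a : Fin n) (f : (Fin n → ℝ) → ℝ) : (Fin n → ℝ) → ℝ :=
  fun x => fderiv ℝ f x (Pi.single a (1 : ℝ))

/-- The Laplacian `Δf = Σ_a ∂_a ∂_a f`. -/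
noncomputable def lap {n : ℕ} (f : (Fin n → ℝ) → ℝ) : (Fin n → ℝ) → ℝ :=
  fun x => ∑ a, pd a (pd a f) x

/-- The divergence `div V = Σ_a ∂_a V^a`. -/
noncomputable def divg {n : ℕ} (V : (Fin n → ℝ) → (Fin n → ℝ)) : (Fin n → ℝ) → ℝ :=
  fun x => ∑ a, pd a (fun y => V y a) x

/-- A conformal Killing vector on ℝⁿ. -/
def IsCKV (n : ℕ) (V : (Fin n → ℝ) → (Fin n → ℝ)) : Prop :=
  ContDiff ℝ (⊤ : ℕ∞) V ∧ ∀ (a b : Fin n) (x : Fin n → ℝ),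
    pd a (fun y => V y b) x + pd b (fun y => V y a) x
      = 2 / (n : ℝ) * divg V x * (if a = b then (1 : ℝ) else 0)

section Aux
variable {n : ℕ} {f g : (Fin n → ℝ) → ℝ} {a b : Fin n} {x : Fin n → ℝ}

theorem pd_contDiff (hf : ContDiff ℝ (⊤ : ℕ∞) f) (a : Fin n) : ContDiff ℝ (⊤ : ℕ∞) (pd a f) :=
  (hf.fderiv_right (by simp)).clm_apply contDiff_const

theorem cd_diff (hf : ContDiff ℝ (⊤ : ℕ∞) f) : Differentiable ℝ f :=
  hf.differentiable (by simp)

theorem pd_const (c : ℝ) : pd a (fun _ => c) x = 0 := by simp [pd]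

theorem pd_add (hf : DifferentiableAt ℝ f x) (hg : DifferentiableAt ℝ g x) :
    pd a (fun y => f y + g y) x = pd a f x + pd a g x := by
  simp [pd, fderiv_fun_add hf hg]

theorem pd_sub (hf : DifferentiableAt ℝ f x) (hg : DifferentiableAt ℝ g x) :
    pd a (fun y => f y - g y) x = pd a f x - pd a g x := by
  simp [pd, fderiv_fun_sub hf hg]

theorem pd_mul (hf : DifferentiableAt ℝ f x) (hg : DifferentiableAt ℝ g x) :
    pd a (fun y => f y * g y) x = pd a f x * g x + f x * pd a g x := by
  simp [pd, fderiv_fun_mul hf hg]; ring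

theorem pd_const_mul (c : ℝ) (hg : DifferentiableAt ℝ g x) :
    pd a (fun y => c * g y) x = c * pd a g x := by
  simp [pd, fderiv_const_mul hg c]

theorem pd_sum {ι : Type*} (s : Finset ι) (F : ι → (Fin n → ℝ) → ℝ)
    (hF : ∀ i ∈ s, DifferentiableAt ℝ (F i) x) :
    pd a (fun y => ∑ i ∈ s, F i y) x = ∑ i ∈ s, pd a (F i) x := by
  simp only [pd]; rw [fderiv_fun_sum hF]; simp

theorem pd_coord : pd a (fun y : Fin n → ℝ => y b) x = if a = b then 1 else 0 := by
  have : (fun y : Fin n → ℝ => y b) = (ContinuousLinearMap.proj b : (Fin n → ℝ) →L[ℝ] ℝ) := rfl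
  rw [pd, this, ContinuousLinearMap.fderiv]
  simp [Pi.single_apply, eq_comm]

theorem contDiff_coord : ContDiff ℝ (⊤ : ℕ∞) (fun y : Fin n → ℝ => y b) :=
  (ContinuousLinearMap.proj b : (Fin n → ℝ) →L[ℝ] ℝ).contDiff

theorem pd_comm (hf : ContDiff ℝ (⊤ : ℕ∞) f) : pd a (pd b f) x = pd b (pd a f) x := by
  have hd : ContDiff ℝ (⊤ : ℕ∞) (fderiv ℝ f) := hf.fderiv_right (by simp)
  have key : ∀ v w, fderiv ℝ (fun y => fderiv ℝ f y v) x w = fderiv ℝ (fderiv ℝ f) x w v := by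
    intro v w
    rw [fderiv_clm_apply (hd.differentiable (by simp) x)
      (differentiableAt_const v)]
    simp
  have hsymm : fderiv ℝ (fderiv ℝ f) x (Pi.single a 1) (Pi.single b 1)
      = fderiv ℝ (fderiv ℝ f) x (Pi.single b 1) (Pi.single a 1) :=
    (hf.contDiffAt.isSymmSndFDerivAt (by rw [minSmoothness_of_isRCLikeNormedField]; exact WithTop.coe_le_coe.mpr le_top)) _ _
  show fderiv ℝ (fun y => fderiv ℝ f y (Pi.single b 1)) x (Pi.single a 1)
      = fderiv ℝ (fun y => fderiv ℝ f y (Pi.single a 1)) x (Pi.single b 1)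
  rw [key, key, hsymm]

/-- Laplacian of a sum of two functions. -/
theorem lap_add (hf : ContDiff ℝ (⊤ : ℕ∞) f) (hg : ContDiff ℝ (⊤ : ℕ∞) g) :
    lap (fun y => f y + g y) x = lap f x + lap g x := by
  have h1 : ∀ a : Fin n, pd a (fun y => f y + g y) = fun y => pd a f y + pd a g y :=
    fun a => funext fun y => pd_add (cd_diff hf y) (cd_diff hg y)
  simp only [lap, h1]
  rw [← Finset.sum_add_distrib]
  refine Finset.sum_congr rfl fun a _ => ?_
  exact pd_add (cd_diff (pd_contDiff hf a) x) (cd_diff (pd_contDiff hg a) x)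

theorem lap_sub (hf : ContDiff ℝ (⊤ : ℕ∞) f) (hg : ContDiff ℝ (⊤ : ℕ∞) g) :
    lap (fun y => f y - g y) x = lap f x - lap g x := by
  have h1 : ∀ a : Fin n, pd a (fun y => f y - g y) = fun y => pd a f y - pd a g y :=
    fun a => funext fun y => pd_sub (cd_diff hf y) (cd_diff hg y)
  simp only [lap, h1]
  rw [← Finset.sum_sub_distrib]
  refine Finset.sum_congr rfl fun a _ => ?_
  exact pd_sub (cd_diff (pd_contDiff hf a) x) (cd_diff (pd_contDiff hg a) x)

theorem lap_sum {ι : Type*} (s : Finset ι) (F : ι → (Fin n → ℝ) → ℝ)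
    (hF : ∀ i ∈ s, ContDiff ℝ (⊤ : ℕ∞) (F i)) :
    lap (fun y => ∑ i ∈ s, F i y) x = ∑ i ∈ s, lap (F i) x := by
  have h1 : ∀ a : Fin n, pd a (fun y => ∑ i ∈ s, F i y) = fun y => ∑ i ∈ s, pd a (F i) y :=
    fun a => funext fun y => pd_sum s F (fun i hi => cd_diff (hF i hi) y)
  simp only [lap, h1]
  have h2 : ∀ a : Fin n, pd a (fun y => ∑ i ∈ s, pd a (F i) y) x
      = ∑ i ∈ s, pd a (pd a (F i)) x :=
    fun a => pd_sum s _ (fun i hi => cd_diff (pd_contDiff (hF i hi) a) x)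
  rw [Finset.sum_congr rfl fun a _ => h2 a, Finset.sum_comm]

/-- Leibniz rule for the Laplacian. -/
theorem lap_mul (hf : ContDiff ℝ (⊤ : ℕ∞) f) (hg : ContDiff ℝ (⊤ : ℕ∞) g) :
    lap (fun y => f y * g y) x
      = lap f x * g x + 2 * (∑ a, pd a f x * pd a g x) + f x * lap g x := by
  have h1 : ∀ a : Fin n, pd a (fun y => f y * g y) = fun y => pd a f y * g y + f y * pd a g y :=
    fun a => funext fun y => pd_mul (cd_diff hf y) (cd_diff hg y)
  have h2 : ∀ a : Fin n, pd a (pd a (fun y => f y * g y)) x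
      = (pd a (pd a f) x * g x + pd a f x * pd a g x)
        + (pd a f x * pd a g x + f x * pd a (pd a g) x) := by
    intro a
    rw [h1]
    rw [pd_add (((cd_diff (pd_contDiff hf a) x)).fun_mul (cd_diff hg x))
      ((cd_diff hf x).fun_mul (cd_diff (pd_contDiff hg a) x))]
    rw [pd_mul (cd_diff (pd_contDiff hf a) x) (cd_diff hg x),
        pd_mul (cd_diff hf x) (cd_diff (pd_contDiff hg a) x)]
  simp only [lap, h2]
  rw [Finset.sum_add_distrib, Finset.sum_add_distrib, Finset.sum_add_distrib,
    ← Finset.sum_mul, ← Finset.mul_sum]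
  ring

/-- A smooth function with vanishing partial derivatives is constant. -/
theorem const_of_pd (hf : ContDiff ℝ (⊤ : ℕ∞) f) (h : ∀ a x, pd a f x = 0) (x y : Fin n → ℝ) :
    f x = f y := by
  apply is_const_of_fderiv_eq_zero (cd_diff hf)
  intro z
  apply ContinuousLinearMap.coe_injective
  apply (Pi.basisFun ℝ (Fin n)).ext
  intro a
  simpa [Pi.basisFun_apply, pd] using h a z



section V
variable {V : (Fin n → ℝ) → (Fin n → ℝ)}

theorem contDiff_comp (hV : ContDiff ℝ (⊤ : ℕ∞) V) (b : Fin n) : ContDiff ℝ (⊤ : ℕ∞) (fun y => V y b) :=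
  (ContinuousLinearMap.proj b : (Fin n → ℝ) →L[ℝ] ℝ).contDiff.comp hV

theorem contDiff_divg (hV : ContDiff ℝ (⊤ : ℕ∞) V) : ContDiff ℝ (⊤ : ℕ∞) (divg V) :=
  ContDiff.sum fun a _ => pd_contDiff (contDiff_comp hV a) a

variable (hV : ContDiff ℝ (⊤ : ℕ∞) V)
variable (hK : ∀ (a b : Fin n) (x : Fin n → ℝ),
    pd a (fun y => V y b) x + pd b (fun y => V y a) x
      = 2 / (n : ℝ) * divg V x * (if a = b then (1 : ℝ) else 0))

include hV hK

theorem lapV_of_ckv (a : Fin n) (x : Fin n → ℝ) :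
    lap (fun y => V y a) x = (2 / (n : ℝ) - 1) * pd a (divg V) x := by
  have hσ : ContDiff ℝ (⊤ : ℕ∞) (divg V) := contDiff_divg hV
  have hVb : ∀ b : Fin n, ContDiff ℝ (⊤ : ℕ∞) (fun y => V y b) := contDiff_comp hV
  have key : ∀ b : Fin n,
      pd b (pd a (fun y => V y b)) x + pd b (pd b (fun y => V y a)) x
        = if a = b then 2 / (n : ℝ) * pd a (divg V) x else 0 := by
    intro b
    have h1 : (fun y => pd a (fun z => V z b) y + pd b (fun z => V z a) y)
        = fun y => 2 / (n : ℝ) * divg V y * (if a = b then (1 : ℝ) else 0) :=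
      funext fun y => hK a b y
    have h2 : pd b (fun y => pd a (fun z => V z b) y + pd b (fun z => V z a) y) x
        = pd b (pd a (fun z => V z b)) x + pd b (pd b (fun z => V z a)) x :=
      pd_add (cd_diff (pd_contDiff (hVb b) a) x) (cd_diff (pd_contDiff (hVb a) b) x)
    rw [← h2, h1]
    by_cases hab : a = b
    · subst hab
      simp only [eq_self_iff_true, if_true, mul_one]
      exact pd_const_mul _ (cd_diff hσ x)
    · simp only [if_neg hab, mul_zero]
      exact pd_const 0
  have hsum := Finset.sum_congr rfl (fun b (_ : b ∈ Finset.univ) => key b)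
  rw [Finset.sum_add_distrib] at hsum
  have e1 : ∑ b, pd b (pd a (fun y => V y b)) x = pd a (divg V) x := by
    have : ∀ b : Fin n, pd b (pd a (fun y => V y b)) x = pd a (pd b (fun y => V y b)) x :=
      fun b => pd_comm (hVb b)
    rw [Finset.sum_congr rfl fun b _ => this b]
    rw [← pd_sum Finset.univ _ (fun b _ => cd_diff (pd_contDiff (hVb b) b) x)]
    rfl
  have e2 : ∑ b, (if a = b then 2 / (n : ℝ) * pd a (divg V) x else 0)
      = 2 / (n : ℝ) * pd a (divg V) x := by
    simp
  rw [e1, e2] at hsum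
  have e3 : ∑ b, pd b (pd b (fun y => V y a)) x = lap (fun y => V y a) x := rfl
  rw [e3] at hsum
  linarith

theorem hess_divg_of_ckv {b c : Fin n} (hbc : b ≠ c) (x : Fin n → ℝ) :
    pd b (pd b (divg V)) x = - pd c (pd c (divg V)) x := by
  have hσ : ContDiff ℝ (⊤ : ℕ∞) (divg V) := contDiff_divg hV
  have hVb : ∀ b : Fin n, ContDiff ℝ (⊤ : ℕ∞) (fun y => V y b) := contDiff_comp hV
  -- h1 : pd b (pd b Vc) = -(1/n) pd c σ  (as functions, pointwise)
  have h1 : ∀ y, pd b (pd b (fun z => V z c)) y = -(1 / (n : ℝ)) * pd c (divg V) y := by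
    intro y
    -- from CKV(b,c) : pd b Vc + pd c Vb = 0
    have hf : (fun z' => pd b (fun z => V z c) z' + pd c (fun z => V z b) z')
        = fun _ => (0 : ℝ) := by
      funext z'
      have := hK b c z'
      simpa [if_neg hbc] using this
    have h2 : pd b (fun z' => pd b (fun z => V z c) z' + pd c (fun z => V z b) z') y
        = pd b (pd b (fun z => V z c)) y + pd b (pd c (fun z => V z b)) y :=
      pd_add (cd_diff (pd_contDiff (hVb c) b) y) (cd_diff (pd_contDiff (hVb b) c) y)
    have h3 : pd b (pd b (fun z => V z c)) y + pd b (pd c (fun z => V z b)) y = 0 := by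
      rw [← h2, hf]; exact pd_const 0
    -- from CKV(b,b) : 2 pd b Vb = (2/n) σ ; apply pd c
    have hg : (fun z' => pd b (fun z => V z b) z' + pd b (fun z => V z b) z')
        = fun z' => 2 / (n : ℝ) * divg V z' := by
      funext z'
      have := hK b b z'
      simpa using this
    have h4 : pd c (fun z' => pd b (fun z => V z b) z' + pd b (fun z => V z b) z') y
        = pd c (pd b (fun z => V z b)) y + pd c (pd b (fun z => V z b)) y :=
      pd_add (cd_diff (pd_contDiff (hVb b) b) y) (cd_diff (pd_contDiff (hVb b) b) y)
    have h5 : pd c (pd b (fun z => V z b)) y + pd c (pd b (fun z => V z b)) y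
        = 2 / (n : ℝ) * pd c (divg V) y := by
      rw [← h4, hg]; exact pd_const_mul _ (cd_diff hσ y)
    -- pd b (pd c Vb) = pd c (pd b Vb) = (1/n) pd c σ
    have h6 : pd b (pd c (fun z => V z b)) y = pd c (pd b (fun z => V z b)) y :=
      pd_comm (hVb b)
    have hr : 2 / (n : ℝ) * pd c (divg V) y = 2 * (1 / (n : ℝ) * pd c (divg V) y) := by ring
    have : pd c (pd b (fun z => V z b)) y = 1 / (n : ℝ) * pd c (divg V) y := by linarith
    rw [h6, this] at h3; linarith
  -- h2' : pd b (pd c Vc) = (1/n) pd b σ (pointwise)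
  have h2' : ∀ y, pd b (pd c (fun z => V z c)) y = 1 / (n : ℝ) * pd b (divg V) y := by
    intro y
    have hg : (fun z' => pd c (fun z => V z c) z' + pd c (fun z => V z c) z')
        = fun z' => 2 / (n : ℝ) * divg V z' := by
      funext z'
      have := hK c c z'
      simpa using this
    have h4 : pd b (fun z' => pd c (fun z => V z c) z' + pd c (fun z => V z c) z') y
        = pd b (pd c (fun z => V z c)) y + pd b (pd c (fun z => V z c)) y :=
      pd_add (cd_diff (pd_contDiff (hVb c) c) y) (cd_diff (pd_contDiff (hVb c) c) y)
    have h5 : pd b (pd c (fun z => V z c)) y + pd b (pd c (fun z => V z c)) y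
        = 2 / (n : ℝ) * pd b (divg V) y := by
      rw [← h4, hg]; exact pd_const_mul _ (cd_diff hσ y)
    have hr : 2 / (n : ℝ) * pd b (divg V) y = 2 * (1 / (n : ℝ) * pd b (divg V) y) := by ring
    linarith
  -- differentiate h1 in c, h2' in b, compare
  have hσ1 : ContDiff ℝ (⊤ : ℕ∞) (pd c (divg V)) := pd_contDiff hσ c
  have hσ2 : ContDiff ℝ (⊤ : ℕ∞) (pd b (divg V)) := pd_contDiff hσ b
  have H1 : pd c (pd b (pd b (fun z => V z c))) x
      = -(1 / (n : ℝ)) * pd c (pd c (divg V)) x := by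
    rw [show pd b (pd b (fun z => V z c)) = fun y => -(1 / (n : ℝ)) * pd c (divg V) y
        from funext h1]
    exact pd_const_mul _ (cd_diff hσ1 x)
  have H2 : pd b (pd b (pd c (fun z => V z c))) x
      = 1 / (n : ℝ) * pd b (pd b (divg V)) x := by
    rw [show pd b (pd c (fun z => V z c)) = fun y => 1 / (n : ℝ) * pd b (divg V) y
        from funext h2']
    exact pd_const_mul _ (cd_diff hσ2 x)
  -- third-derivative commutation
  have comm1 : pd c (pd b (pd b (fun z => V z c))) x
      = pd b (pd b (pd c (fun z => V z c))) x := by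
    rw [pd_comm (pd_contDiff (hVb c) b)]
    congr 1
    funext y
    rw [pd_comm (hVb c)]
  have hn0 : (n : ℝ) ≠ 0 := by
    have : 0 < n := Nat.pos_of_ne_zero (by rintro rfl; exact hbc (Subsingleton.elim b c))
    exact_mod_cast this.ne'
  rw [comm1, H2] at H1
  field_simp at H1
  linarith

end V

theorem lap_const (c : ℝ) : lap (fun _ : Fin n → ℝ => c) = 0 := by
  funext x
  show (∑ a, pd a (pd a (fun _ : Fin n → ℝ => c)) x) = 0
  refine Finset.sum_eq_zero fun a _ => ?_
  rw [show pd a (fun _ : Fin n → ℝ => c) = fun _ => (0 : ℝ) from funext fun y => pd_const c]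
  exact pd_const 0

theorem lap_const_mul (c : ℝ) (hg : ContDiff ℝ (⊤ : ℕ∞) g) :
    lap (fun y => c * g y) x = c * lap g x := by
  show (∑ a, pd a (pd a (fun y => c * g y)) x) = c * ∑ a, pd a (pd a g) x
  rw [Finset.mul_sum]
  refine Finset.sum_congr rfl fun a _ => ?_
  rw [show pd a (fun y => c * g y) = fun y => c * pd a g y from
    funext fun y => pd_const_mul c (cd_diff hg y)]
  exact pd_const_mul c (cd_diff (pd_contDiff hg a) x)

theorem fun_pd_coord : pd a (fun y : Fin n → ℝ => y b) = fun _ => if a = b then (1:ℝ) else 0 :=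
  funext fun _ => pd_coord

theorem lap_coord : lap (fun y : Fin n → ℝ => y b) = 0 := by
  funext x
  show (∑ a, pd a (pd a (fun y : Fin n → ℝ => y b)) x) = 0
  refine Finset.sum_eq_zero fun a _ => ?_
  rw [fun_pd_coord]
  exact pd_const _

theorem exists_two_ne (hn : 3 ≤ n) (c : Fin n) : ∃ b e : Fin n, b ≠ c ∧ e ≠ c ∧ b ≠ e := by
  have h0 : (0 : ℕ) < n := by omega
  have h1 : (1 : ℕ) < n := by omega
  have h2 : (2 : ℕ) < n := by omega
  by_cases hc0 : c = ⟨0, h0⟩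
  · exact ⟨⟨1, h1⟩, ⟨2, h2⟩, by simp [hc0, Fin.ext_iff], by simp [hc0, Fin.ext_iff],
      by simp [Fin.ext_iff]⟩
  · by_cases hc1 : c = ⟨1, h1⟩
    · exact ⟨⟨0, h0⟩, ⟨2, h2⟩, by simp [hc1, Fin.ext_iff], by simp [hc1, Fin.ext_iff],
        by simp [Fin.ext_iff]⟩
    · exact ⟨⟨0, h0⟩, ⟨1, h1⟩, Ne.symm (by simpa [eq_comm] using hc0),
        Ne.symm (by simpa [eq_comm] using hc1), by simp [Fin.ext_iff]⟩

theorem lap_divg_of_ckv {V : (Fin n → ℝ) → (Fin n → ℝ)} (hn : 3 ≤ n)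
    (hV : ContDiff ℝ (⊤ : ℕ∞) V)
    (hK : ∀ (a b : Fin n) (x : Fin n → ℝ),
      pd a (fun y => V y b) x + pd b (fun y => V y a) x
        = 2 / (n : ℝ) * divg V x * (if a = b then (1 : ℝ) else 0))
    (x : Fin n → ℝ) : lap (divg V) x = 0 := by
  have diag : ∀ c : Fin n, pd c (pd c (divg V)) x = 0 := by
    intro c
    obtain ⟨b, e, hbc, hec, hbe⟩ := exists_two_ne hn c
    have h1 := hess_divg_of_ckv hV hK hbc x
    have h2 := hess_divg_of_ckv hV hK hbe x
    have h3 := hess_divg_of_ckv hV hK hec x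
    linarith
  exact Finset.sum_eq_zero fun c _ => diag c

theorem lap_pd (hf : ContDiff ℝ (⊤ : ℕ∞) f) (hlapf : lap f = 0) (a : Fin n) (x : Fin n → ℝ) :
    lap (pd a f) x = 0 := by
  have step : ∀ b : Fin n, pd b (pd b (pd a f)) x = pd a (pd b (pd b f)) x := by
    intro b
    rw [show pd b (pd a f) = pd a (pd b f) from funext fun y => pd_comm hf]
    exact pd_comm (pd_contDiff hf b)
  show (∑ b, pd b (pd b (pd a f)) x) = 0
  rw [Finset.sum_congr rfl fun b _ => step b]
  rw [← pd_sum Finset.univ _ (fun b _ => cd_diff (pd_contDiff (pd_contDiff hf b) b) x)]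
  rw [show (fun y => ∑ b, pd b (pd b f) y) = lap f from rfl,
    show lap f = (fun _ => (0:ℝ)) from hlapf]
  exact pd_const 0

/-- Backward direction of the main theorem. -/
theorem backward {V : (Fin n → ℝ) → (Fin n → ℝ)} {u : (Fin n → ℝ) → ℝ} (hn : 3 ≤ n)
    (hV : ContDiff ℝ (⊤ : ℕ∞) V) (hu : ContDiff ℝ (⊤ : ℕ∞) u)
    (hK : ∀ (a b : Fin n) (x : Fin n → ℝ),
      pd a (fun y => V y b) x + pd b (fun y => V y a) x
        = 2 / (n : ℝ) * divg V x * (if a = b then (1 : ℝ) else 0))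
    (c : ℝ) (huc : u = fun x => ((n : ℝ) - 2) / (2 * n) * divg V x + c)
    (f : (Fin n → ℝ) → ℝ) (hf : ContDiff ℝ (⊤ : ℕ∞) f) (hlapf : lap f = 0) :
    lap (fun x => (∑ a, V x a * pd a f x) + u x * f x) = 0 := by
  have hn0 : (n : ℝ) ≠ 0 := by
    have : (0:ℕ) < n := by omega
    exact_mod_cast this.ne'
  have hσ : ContDiff ℝ (⊤ : ℕ∞) (divg V) := contDiff_divg hV
  have hVb : ∀ b : Fin n, ContDiff ℝ (⊤ : ℕ∞) (fun y => V y b) := contDiff_comp hV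
  have hpdf : ∀ a : Fin n, ContDiff ℝ (⊤ : ℕ∞) (pd a f) := pd_contDiff hf
  have hg1 : ContDiff ℝ (⊤ : ℕ∞) (fun x => ∑ a, V x a * pd a f x) :=
    ContDiff.sum fun a _ => (hVb a).mul (hpdf a)
  have hg2 : ContDiff ℝ (⊤ : ℕ∞) (fun x => u x * f x) := hu.mul hf
  -- pd of u
  have hpdu : ∀ (a : Fin n) (x : Fin n → ℝ),
      pd a u x = ((n : ℝ) - 2) / (2 * n) * pd a (divg V) x := by
    intro a x
    rw [huc]
    rw [pd_add ((contDiff_const.mul hσ).differentiable (by simp) x)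
      (differentiableAt_const c)]
    rw [pd_const_mul _ (cd_diff hσ x), pd_const c, add_zero]
  -- lap of u
  have hlapu : ∀ x : Fin n → ℝ, lap u x = 0 := by
    intro x
    rw [huc]
    rw [lap_add (contDiff_const.mul hσ) contDiff_const]
    rw [lap_const_mul _ hσ, lap_divg_of_ckv hn hV hK x,
      show lap (fun _ : Fin n → ℝ => c) = 0 from lap_const c]
    simp
  funext x
  rw [lap_add hg1 hg2]
  -- second piece
  have e2 : lap (fun x => u x * f x) x
      = 2 * ∑ a, pd a u x * pd a f x := by
    rw [lap_mul hu hf, hlapu x, congrFun hlapf x]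
    simp
  -- first piece
  have e1 : lap (fun x => ∑ a, V x a * pd a f x) x
      = ∑ a, (lap (fun y => V y a) x * pd a f x
          + 2 * ∑ b, pd b (fun y => V y a) x * pd b (pd a f) x) := by
    rw [lap_sum Finset.univ _ (fun a _ => (hVb a).mul (hpdf a))]
    refine Finset.sum_congr rfl fun a _ => ?_
    rw [lap_mul (hVb a) (hpdf a), lap_pd hf hlapf a x]
    ring_nf
  rw [e1, e2]
  -- the mixed second-order term vanishes
  have T0 : ∑ a, ∑ b, pd b (fun y => V y a) x * pd b (pd a f) x = 0 := by
    have swap : ∑ a, ∑ b, pd b (fun y => V y a) x * pd b (pd a f) x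
        = ∑ a, ∑ b, pd a (fun y => V y b) x * pd b (pd a f) x := by
      rw [Finset.sum_comm]
      refine Finset.sum_congr rfl fun a _ => Finset.sum_congr rfl fun b _ => ?_
      rw [pd_comm hf]
    have split : ∑ a, ∑ b, pd b (fun y => V y a) x * pd b (pd a f) x
        = (∑ a, ∑ b, (2 / (n : ℝ) * divg V x * (if b = a then (1:ℝ) else 0))
            * pd b (pd a f) x)
          - ∑ a, ∑ b, pd a (fun y => V y b) x * pd b (pd a f) x := by
      rw [← Finset.sum_sub_distrib]
      refine Finset.sum_congr rfl fun a _ => ?_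
      rw [← Finset.sum_sub_distrib]
      refine Finset.sum_congr rfl fun b _ => ?_
      have h : pd b (fun y => V y a) x
          = 2 / (n : ℝ) * divg V x * (if b = a then (1:ℝ) else 0)
            - pd a (fun y => V y b) x := by linarith [hK b a x]
      rw [h]; ring
    have rhs0 : ∑ a, ∑ b, (2 / (n : ℝ) * divg V x * (if b = a then (1:ℝ) else 0))
        * pd b (pd a f) x = 0 := by
      have : ∀ a : Fin n, ∑ b, (2 / (n : ℝ) * divg V x * (if b = a then (1:ℝ) else 0))
          * pd b (pd a f) x = 2 / (n : ℝ) * divg V x * pd a (pd a f) x := by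
        intro a
        rw [Finset.sum_eq_single a]
        · simp
        · intro b _ hba; simp [hba]
        · simp
      rw [Finset.sum_congr rfl fun a _ => this a, ← Finset.mul_sum]
      rw [show (∑ a, pd a (pd a f) x) = lap f x from rfl, congrFun hlapf x]
      simp
    rw [split, rhs0, ← swap]
    linarith
  -- first-order terms cancel
  have F0 : ∑ a, lap (fun y => V y a) x * pd a f x + 2 * ∑ a, pd a u x * pd a f x = 0 := by
    rw [Finset.mul_sum, ← Finset.sum_add_distrib]
    refine Finset.sum_eq_zero fun a _ => ?_
    rw [lapV_of_ckv hV hK a x, hpdu a x]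
    field_simp
    ring
  have expand : ∑ a, (lap (fun y => V y a) x * pd a f x
      + 2 * ∑ b, pd b (fun y => V y a) x * pd b (pd a f) x)
      = ∑ a, lap (fun y => V y a) x * pd a f x
        + 2 * ∑ a, ∑ b, pd b (fun y => V y a) x * pd b (pd a f) x := by
    rw [Finset.sum_add_distrib, Finset.mul_sum]
  rw [expand, T0]
  show _ = (0 : (Fin n → ℝ) → ℝ) x
  simp only [Pi.zero_apply]
  linarith [F0]

section Forward
variable {V : (Fin n → ℝ) → (Fin n → ℝ)} {u : (Fin n → ℝ) → ℝ}

/-- Step A : `lap u = 0`. -/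
theorem stepA (hV : ContDiff ℝ (⊤ : ℕ∞) V) (hu : ContDiff ℝ (⊤ : ℕ∞) u)
    (hD : ∀ f : (Fin n → ℝ) → ℝ, ContDiff ℝ (⊤ : ℕ∞) f → lap f = 0 →
        lap (fun x => (∑ a, V x a * pd a f x) + u x * f x) = 0) :
    lap u = 0 := by
  have h := hD (fun _ => (1:ℝ)) contDiff_const (lap_const 1)
  have heq : (fun x => (∑ a, V x a * pd a (fun _ => (1:ℝ)) x) + u x * (fun _ => (1:ℝ)) x)
      = u := by
    funext z
    simp [pd_const]
  rwa [heq] at h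

/-- Step B : `lap V^b + 2 ∂_b u = 0`. -/
theorem stepB (hV : ContDiff ℝ (⊤ : ℕ∞) V) (hu : ContDiff ℝ (⊤ : ℕ∞) u)
    (hD : ∀ f : (Fin n → ℝ) → ℝ, ContDiff ℝ (⊤ : ℕ∞) f → lap f = 0 →
        lap (fun x => (∑ a, V x a * pd a f x) + u x * f x) = 0)
    (b : Fin n) (x : Fin n → ℝ) :
    lap (fun y => V y b) x + 2 * pd b u x = 0 := by
  have hlapu := stepA hV hu hD
  have h := hD (fun y => y b) contDiff_coord lap_coord
  have heq : (fun x => (∑ a, V x a * pd a (fun y : Fin n → ℝ => y b) x)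
        + u x * (fun y : Fin n → ℝ => y b) x)
      = fun x => V x b + u x * x b := by
    funext z
    simp [fun_pd_coord]
  rw [heq] at h
  have h2 := congrFun h x
  rw [lap_add (contDiff_comp hV b) (hu.mul contDiff_coord)] at h2
  rw [lap_mul hu contDiff_coord] at h2
  rw [congrFun hlapu x, congrFun (lap_coord (b := b)) x] at h2
  have e : ∑ a, pd a u x * pd a (fun y : Fin n → ℝ => y b) x = pd b u x := by
    rw [Finset.sum_congr rfl fun a _ => by rw [fun_pd_coord]]
    simp
  rw [e] at h2
  simp only [Pi.zero_apply] at h2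
  linarith

/-- Step C : off-diagonal CKV relation. -/
theorem stepC (hV : ContDiff ℝ (⊤ : ℕ∞) V) (hu : ContDiff ℝ (⊤ : ℕ∞) u)
    (hD : ∀ f : (Fin n → ℝ) → ℝ, ContDiff ℝ (⊤ : ℕ∞) f → lap f = 0 →
        lap (fun x => (∑ a, V x a * pd a f x) + u x * f x) = 0)
    {a b : Fin n} (hab : a ≠ b) (x : Fin n → ℝ) :
    pd a (fun y => V y b) x + pd b (fun y => V y a) x = 0 := by
  have hlapu := stepA hV hu hD
  have hVb : ∀ e : Fin n, ContDiff ℝ (⊤ : ℕ∞) (fun y => V y e) := contDiff_comp hV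
  set f : (Fin n → ℝ) → ℝ := fun y => y a * y b with hfdef
  have hf : ContDiff ℝ (⊤ : ℕ∞) f := contDiff_coord.mul contDiff_coord
  have pdf : ∀ e : Fin n, pd e f
      = fun z => (if e = a then (1:ℝ) else 0) * z b + z a * (if e = b then (1:ℝ) else 0) := by
    intro e
    funext z
    rw [hfdef]
    rw [pd_mul (cd_diff contDiff_coord z) (cd_diff contDiff_coord z), pd_coord, pd_coord]
  have lapf0 : lap f = 0 := by
    funext z
    show (∑ e, pd e (pd e f) z) = 0
    refine Finset.sum_eq_zero fun e _ => ?_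
    rw [pdf e]
    rw [pd_add (((differentiableAt_const _).fun_mul (cd_diff contDiff_coord z)))
      ((cd_diff contDiff_coord z).fun_mul (differentiableAt_const _))]
    rw [pd_const_mul _ (cd_diff contDiff_coord z),
      pd_mul (cd_diff contDiff_coord z) (differentiableAt_const _), pd_coord, pd_coord]
    rcases eq_or_ne e a with rfl | hea
    · simp [if_neg hab, pd_const]
    · simp [if_neg hea, pd_const]
  have h := hD f hf lapf0
  have heq : (fun x => (∑ e, V x e * pd e f x) + u x * f x)
      = fun x => V x a * x b + (x a * V x b + u x * (x a * x b)) := by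
    funext z
    rw [Finset.sum_congr rfl fun e _ => by rw [pdf e]]
    simp only [mul_add, Finset.sum_add_distrib]
    rw [hfdef]
    simp [mul_ite, ite_mul, mul_comm, mul_assoc, mul_left_comm]
    ring
  rw [heq] at h
  have h2 := congrFun h x
  rw [lap_add ((hVb a).mul contDiff_coord)
    ((contDiff_coord.mul (hVb b)).add (hu.mul (contDiff_coord.mul contDiff_coord)))] at h2
  rw [lap_add (contDiff_coord.mul (hVb b)) (hu.mul (contDiff_coord.mul contDiff_coord))] at h2
  rw [lap_mul (hVb a) contDiff_coord, lap_mul contDiff_coord (hVb b),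
    lap_mul hu (contDiff_coord.mul contDiff_coord)] at h2
  rw [congrFun (lap_coord (b := b)) x, congrFun (lap_coord (b := a)) x,
    congrFun hlapu x] at h2
  have hlf : lap (fun y : Fin n → ℝ => y a * y b) x = 0 := congrFun lapf0 x
  rw [hlf] at h2
  have e1 : ∑ e, pd e (fun y => V y a) x * pd e (fun y : Fin n → ℝ => y b) x
      = pd b (fun y => V y a) x := by
    rw [Finset.sum_congr rfl fun e _ => by rw [fun_pd_coord]]
    simp
  have e2 : ∑ e, pd e (fun y : Fin n → ℝ => y a) x * pd e (fun y => V y b) x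
      = pd a (fun y => V y b) x := by
    rw [Finset.sum_congr rfl fun e _ => by rw [fun_pd_coord]]
    simp
  have e3 : ∑ e, pd e u x * pd e (fun y : Fin n → ℝ => y a * y b) x
      = pd a u x * x b + x a * pd b u x := by
    rw [Finset.sum_congr rfl fun e _ => by rw [pdf e]]
    simp only [mul_add, Finset.sum_add_distrib]
    simp [mul_ite, ite_mul]
    ring
  rw [e1, e2, e3] at h2
  have hBa : lap (fun y => V y a) x = -2 * pd a u x := by linarith [stepB hV hu hD a x]
  have hBb : lap (fun y => V y b) x = -2 * pd b u x := by linarith [stepB hV hu hD b x]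
  rw [hBa, hBb] at h2
  simp only [Pi.zero_apply] at h2
  linarith

/-- Step D : equality of diagonal entries. -/
theorem stepD (hV : ContDiff ℝ (⊤ : ℕ∞) V) (hu : ContDiff ℝ (⊤ : ℕ∞) u)
    (hD : ∀ f : (Fin n → ℝ) → ℝ, ContDiff ℝ (⊤ : ℕ∞) f → lap f = 0 →
        lap (fun x => (∑ a, V x a * pd a f x) + u x * f x) = 0)
    {a b : Fin n} (hab : a ≠ b) (x : Fin n → ℝ) :
    pd a (fun y => V y a) x = pd b (fun y => V y b) x := by
  have hlapu := stepA hV hu hD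
  have hVb : ∀ e : Fin n, ContDiff ℝ (⊤ : ℕ∞) (fun y => V y e) := contDiff_comp hV
  set f : (Fin n → ℝ) → ℝ := fun y => y a * y a - y b * y b with hfdef
  have hf : ContDiff ℝ (⊤ : ℕ∞) f := (contDiff_coord.mul contDiff_coord).sub
    (contDiff_coord.mul contDiff_coord)
  have pdf : ∀ e : Fin n, pd e f
      = fun z => ((if e = a then (1:ℝ) else 0) * z a + z a * (if e = a then (1:ℝ) else 0))
        - ((if e = b then (1:ℝ) else 0) * z b + z b * (if e = b then (1:ℝ) else 0)) := by
    intro e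
    funext z
    rw [hfdef]
    rw [pd_sub ((cd_diff contDiff_coord z).fun_mul (cd_diff contDiff_coord z))
      ((cd_diff contDiff_coord z).fun_mul (cd_diff contDiff_coord z))]
    rw [pd_mul (cd_diff contDiff_coord z) (cd_diff contDiff_coord z),
      pd_mul (cd_diff contDiff_coord z) (cd_diff contDiff_coord z),
      pd_coord, pd_coord]
  have pdpd : ∀ (e : Fin n) (z : Fin n → ℝ), pd e (pd e f) z
      = 2 * (if e = a then (1:ℝ) else 0) - 2 * (if e = b then (1:ℝ) else 0) := by
    intro e z
    rw [pdf e]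
    have d1 : DifferentiableAt ℝ (fun z' : Fin n → ℝ =>
        (if e = a then (1:ℝ) else 0) * z' a + z' a * (if e = a then (1:ℝ) else 0)) z :=
      ((differentiableAt_const _).mul (cd_diff contDiff_coord z)).add
        ((cd_diff contDiff_coord z).mul (differentiableAt_const _))
    have d2 : DifferentiableAt ℝ (fun z' : Fin n → ℝ =>
        (if e = b then (1:ℝ) else 0) * z' b + z' b * (if e = b then (1:ℝ) else 0)) z :=
      ((differentiableAt_const _).mul (cd_diff contDiff_coord z)).add
        ((cd_diff contDiff_coord z).mul (differentiableAt_const _))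
    rw [pd_sub d1 d2,
      pd_add ((differentiableAt_const _).fun_mul (cd_diff contDiff_coord z))
        ((cd_diff contDiff_coord z).fun_mul (differentiableAt_const _)),
      pd_add ((differentiableAt_const _).fun_mul (cd_diff contDiff_coord z))
        ((cd_diff contDiff_coord z).fun_mul (differentiableAt_const _)),
      pd_const_mul _ (cd_diff contDiff_coord z),
      pd_const_mul _ (cd_diff contDiff_coord z),
      pd_mul (cd_diff contDiff_coord z) (differentiableAt_const _),
      pd_mul (cd_diff contDiff_coord z) (differentiableAt_const _)]
    simp only [pd_coord, pd_const]
    rcases eq_or_ne e a with rfl | hea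
    · simp [if_neg hab]; norm_num
    · rcases eq_or_ne e b with rfl | heb
      · simp [if_neg hea]; norm_num
      · simp [if_neg hea, if_neg heb]
  have lapf0 : lap f = 0 := by
    funext z
    show (∑ e, pd e (pd e f) z) = 0
    rw [Finset.sum_congr rfl fun e _ => pdpd e z]
    rw [Finset.sum_sub_distrib]
    simp [Finset.sum_ite_eq, if_neg hab]
  have h := hD f hf lapf0
  have heq : (fun x => (∑ e, V x e * pd e f x) + u x * f x)
      = fun x => V x a * x a + (V x a * x a) - (V x b * x b + V x b * x b)
          + u x * (x a * x a - x b * x b) := by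
    funext z
    rw [Finset.sum_congr rfl fun e _ => by rw [pdf e]]
    simp only [mul_sub, mul_add, Finset.sum_sub_distrib, Finset.sum_add_distrib]
    rw [hfdef]
    simp [mul_ite, ite_mul]
    ring
  rw [heq] at h
  have h2 := congrFun h x
  have sVa : ContDiff ℝ (⊤ : ℕ∞) (fun x => V x a * x a + V x a * x a) :=
    ((hVb a).mul contDiff_coord).add ((hVb a).mul contDiff_coord)
  have sVb : ContDiff ℝ (⊤ : ℕ∞) (fun x => V x b * x b + V x b * x b) :=
    ((hVb b).mul contDiff_coord).add ((hVb b).mul contDiff_coord)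
  rw [lap_add (sVa.sub sVb) (hu.mul ((contDiff_coord.mul contDiff_coord).sub
      (contDiff_coord.mul contDiff_coord))),
    lap_sub sVa sVb,
    lap_add ((hVb a).mul contDiff_coord) ((hVb a).mul contDiff_coord),
    lap_add ((hVb b).mul contDiff_coord) ((hVb b).mul contDiff_coord),
    lap_mul (hVb a) contDiff_coord, lap_mul (hVb b) contDiff_coord,
    lap_mul hu ((contDiff_coord.mul contDiff_coord).sub (contDiff_coord.mul contDiff_coord)),
    congrFun (lap_coord (b := a)) x, congrFun (lap_coord (b := b)) x,
    congrFun hlapu x] at h2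
  have hlf : lap (fun y : Fin n → ℝ => y a * y a - y b * y b) x = 0 := congrFun lapf0 x
  rw [hlf] at h2
  have eA : ∑ e, pd e (fun y => V y a) x * pd e (fun y : Fin n → ℝ => y a) x
      = pd a (fun y => V y a) x := by
    rw [Finset.sum_congr rfl fun e _ => by rw [fun_pd_coord]]
    simp
  have eB : ∑ e, pd e (fun y => V y b) x * pd e (fun y : Fin n → ℝ => y b) x
      = pd b (fun y => V y b) x := by
    rw [Finset.sum_congr rfl fun e _ => by rw [fun_pd_coord]]
    simp
  have eU : ∑ e, pd e u x * pd e (fun y : Fin n → ℝ => y a * y a - y b * y b) x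
      = 2 * (pd a u x * x a) - 2 * (pd b u x * x b) := by
    rw [Finset.sum_congr rfl fun e _ => by rw [pdf e]]
    simp only [mul_sub, mul_add, Finset.sum_sub_distrib, Finset.sum_add_distrib]
    simp [mul_ite, ite_mul]
    ring
  rw [eA, eB, eU] at h2
  have hBa : lap (fun y => V y a) x = -2 * pd a u x := by linarith [stepB hV hu hD a x]
  have hBb : lap (fun y => V y b) x = -2 * pd b u x := by linarith [stepB hV hu hD b x]
  rw [hBa, hBb] at h2
  simp only [Pi.zero_apply] at h2
  linarith
end Forward

end Aux


/-- For smooth `V` and `u` on ℝⁿ (n ≥ 3), the operator `D f = Σ_a V^a ∂_a f + u f`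
maps every harmonic function to a harmonic function iff `V` is a conformal Killing
vector and `u = ((n−2)/(2n)) div V + c` for some constant `c`. -/
theorem stmt_4 (n : ℕ) (hn : 3 ≤ n) (V : (Fin n → ℝ) → (Fin n → ℝ))
    (hV : ContDiff ℝ (⊤ : ℕ∞) V) (u : (Fin n → ℝ) → ℝ) (hu : ContDiff ℝ (⊤ : ℕ∞) u) :
    (∀ f : (Fin n → ℝ) → ℝ, ContDiff ℝ (⊤ : ℕ∞) f → lap f = 0 →
        lap (fun x => (∑ a, V x a * pd a f x) + u x * f x) = 0)
      ↔ (IsCKV n V ∧ ∃ c : ℝ, u = fun x => ((n : ℝ) - 2) / (2 * n) * divg V x + c) := by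
  have hn0 : (n : ℝ) ≠ 0 := by
    have : (0:ℕ) < n := by omega
    exact_mod_cast this.ne'
  constructor
  · intro hD
    have hσ : ContDiff ℝ (⊤ : ℕ∞) (divg V) := contDiff_divg hV
    have hK : ∀ (a b : Fin n) (x : Fin n → ℝ),
        pd a (fun y => V y b) x + pd b (fun y => V y a) x
          = 2 / (n : ℝ) * divg V x * (if a = b then (1:ℝ) else 0) := by
      intro a b x
      by_cases hab : a = b
      · subst hab
        rw [if_pos rfl, mul_one]
        have hdiag : ∀ e : Fin n, pd e (fun y => V y e) x = pd a (fun y => V y a) x := by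
          intro e
          rcases eq_or_ne e a with rfl | hea
          · rfl
          · exact stepD hV hu hD hea x
        have hdv : divg V x = n * pd a (fun y => V y a) x := by
          show (∑ e, pd e (fun y => V y e) x) = _
          rw [Finset.sum_congr rfl fun e _ => hdiag e]
          simp [Finset.card_univ, mul_comm]
        rw [hdv]
        field_simp
        ring
      · rw [if_neg hab, mul_zero]
        exact stepC hV hu hD hab x
    refine ⟨⟨hV, hK⟩, ?_⟩
    refine ⟨u 0 - ((n:ℝ) - 2) / (2*n) * divg V 0, ?_⟩
    have hw : ContDiff ℝ (⊤ : ℕ∞) (fun x => u x - ((n:ℝ) - 2) / (2*n) * divg V x) :=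
      hu.sub (contDiff_const.mul hσ)
    have hpdw : ∀ (a : Fin n) (x : Fin n → ℝ),
        pd a (fun x => u x - ((n:ℝ) - 2) / (2*n) * divg V x) x = 0 := by
      intro a x
      rw [pd_sub (cd_diff hu x)
        ((contDiff_const.mul hσ).differentiable (by simp) x)]
      rw [pd_const_mul _ (cd_diff hσ x)]
      have h1 := stepB hV hu hD a x
      have h2 := lapV_of_ckv hV hK a x
      have h3 : (2:ℝ)/(n:ℝ) - 1 = -2 * (((n:ℝ) - 2) / (2*n)) := by
        field_simp
        ring
      rw [h3] at h2
      linarith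
    have hconst := const_of_pd hw hpdw
    funext x
    have h4 := hconst x 0
    linarith
  · rintro ⟨⟨hV', hK⟩, c, hc⟩
    intro f hf hlapf
    exact backward hn hV' hu hK c hc f hf hlapf
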